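/- For each k ∈ {1,…,d}, E[(Σ_{i=1}^d Yᵢ)⁶ · Y_k²] = ψ₈ + 16(d − 1)·ψ₆ + 15(d − 1)·ψ₄² + 60(d − 1)(d − 2)·ψ₄ + 15(d − 1)(d − 2)(d − 3). -/

import Mathlib

/-!
Write `∑ᵢ Yᵢ = Y_k + S` with `S = ∑_{i ≠ k} Yᵢ` independent of `Y_k`. Expanding binomially and
factoring each expectation by independence gives
`E[(Y_k + S)⁶ Y_k²] = ∑ⱼ C(6,j) E[Y_k^(j+2)] E[S^(6-j)]`. Odd moments of `Y_k` vanish by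
symmetry, so only `E[S²]`, `E[S⁴]`, `E[S⁶]` are needed; they follow from the same expansion by
induction on the set of summands, which also shows that the odd moments of `S` vanish.
-/

open MeasureTheory ProbabilityTheory Finset

section

variable {Ω : Type*} [MeasurableSpace Ω] {μ : Measure Ω}

theorem MeasureTheory.MemLp.integrable_pow_of_le [IsFiniteMeasure μ] {X : Ω → ℝ} {N n : ℕ}
    (hX : MemLp X N μ) (hn : n ≤ N) : Integrable (fun ω => X ω ^ n) μ := by
  have hint : Integrable (fun ω => ‖X ω‖ ^ n) μ :=
    (hX.mono_exponent (by exact_mod_cast hn)).integrable_norm_pow'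
  exact hint.mono' (hX.aestronglyMeasurable.pow n) (ae_of_all _ fun ω => (norm_pow _ _).le)

theorem integral_pow_eq_zero_of_map_neg {X : Ω → ℝ} (hX : AEMeasurable X μ)
    (hsymm : μ.map X = μ.map (fun ω => -X ω)) {n : ℕ} (hn : Odd n) :
    ∫ ω, X ω ^ n ∂μ = 0 := by
  have hflip : ∫ ω, X ω ^ n ∂μ = -∫ ω, X ω ^ n ∂μ := calc
    ∫ ω, X ω ^ n ∂μ = ∫ x, x ^ n ∂(μ.map X) :=
        (integral_map hX (continuous_pow n).aestronglyMeasurable).symm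
    _ = ∫ x, x ^ n ∂(μ.map (fun ω => -X ω)) := by rw [hsymm]
    _ = ∫ ω, (-X ω) ^ n ∂μ := integral_map hX.neg (continuous_pow n).aestronglyMeasurable
    _ = -∫ ω, X ω ^ n ∂μ := by simp_rw [hn.neg_pow]; exact integral_neg _
  linarith

theorem ProbabilityTheory.IndepFun.integral_add_pow_mul_pow [IsFiniteMeasure μ] {X S : Ω → ℝ}
    (hXS : IndepFun X S μ) {m p : ℕ} (hX : MemLp X (m + p : ℕ) μ) (hS : MemLp S m μ) :
    ∫ ω, (X ω + S ω) ^ m * X ω ^ p ∂μ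
      = ∑ j ∈ range (m + 1), m.choose j * (∫ ω, X ω ^ (j + p) ∂μ) * ∫ ω, S ω ^ (m - j) ∂μ := by
  have hpow (j : ℕ) : IndepFun (fun ω => X ω ^ (j + p)) (fun ω => S ω ^ (m - j)) μ :=
    hXS.comp (measurable_id.pow_const (j + p)) (measurable_id.pow_const (m - j))
  have hXint {j} (hj : j ∈ range (m + 1)) : Integrable (fun ω => X ω ^ (j + p)) μ :=
    hX.integrable_pow_of_le (by rw [mem_range] at hj; omega)
  have hSint (j : ℕ) : Integrable (fun ω => S ω ^ (m - j)) μ :=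
    hS.integrable_pow_of_le (Nat.sub_le m j)
  have hexpand : (fun ω => (X ω + S ω) ^ m * X ω ^ p) = fun ω =>
      ∑ j ∈ range (m + 1), (m.choose j : ℝ) * (X ω ^ (j + p) * S ω ^ (m - j)) := by
    funext ω
    rw [add_pow, sum_mul]
    exact sum_congr rfl fun j _ => by ring
  rw [hexpand, integral_finsetSum _ fun j hj => by
    exact ((hpow j).integrable_mul (hXint hj) (hSint j)).const_mul _]
  refine sum_congr rfl fun j hj => ?_
  rw [integral_const_mul, mul_assoc]
  congr 1
  exact (hpow j).integral_mul_eq_mul_integral (hXint hj).1 (hSint j).1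

variable {ι : Type*} [DecidableEq ι] {Y : ι → Ω → ℝ}

theorem ProbabilityTheory.iIndepFun.integral_sum_insert_pow_mul_pow [IsFiniteMeasure μ]
    (hindep : iIndepFun Y μ) (hmeas : ∀ i, Measurable (Y i)) {N : ℕ}
    (hL : ∀ i, MemLp (Y i) N μ) {s : Finset ι} {a : ι} (ha : a ∉ s) {m p : ℕ}
    (hmp : m + p ≤ N) :
    ∫ ω, (∑ i ∈ insert a s, Y i ω) ^ m * Y a ω ^ p ∂μ
      = ∑ j ∈ range (m + 1),
          m.choose j * (∫ ω, Y a ω ^ (j + p) ∂μ) * ∫ ω, (∑ i ∈ s, Y i ω) ^ (m - j) ∂μ := by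
  have hindep' : IndepFun (Y a) (fun ω => ∑ i ∈ s, Y i ω) μ := by
    simpa only [sum_fn] using (hindep.indepFun_finsetSum_of_notMem hmeas ha).symm
  have hsum : MemLp (fun ω => ∑ i ∈ s, Y i ω) N μ := by
    simpa only [sum_fn] using memLp_finsetSum' s fun i _ => hL i
  simp_rw [sum_insert ha]
  exact hindep'.integral_add_pow_mul_pow ((hL a).mono_exponent (by exact_mod_cast hmp))
    (hsum.mono_exponent (by exact_mod_cast (by omega : m ≤ N)))

theorem ProbabilityTheory.iIndepFun.integral_sum_insert_pow [IsFiniteMeasure μ]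
    (hindep : iIndepFun Y μ) (hmeas : ∀ i, Measurable (Y i)) {N : ℕ}
    (hL : ∀ i, MemLp (Y i) N μ) {s : Finset ι} {a : ι} (ha : a ∉ s) {n : ℕ} (hn : n ≤ N) :
    ∫ ω, (∑ i ∈ insert a s, Y i ω) ^ n ∂μ
      = ∑ j ∈ range (n + 1),
          n.choose j * (∫ ω, Y a ω ^ j ∂μ) * ∫ ω, (∑ i ∈ s, Y i ω) ^ (n - j) ∂μ := by
  simpa using hindep.integral_sum_insert_pow_mul_pow hmeas hL ha (p := 0) (by simpa using hn)

theorem ProbabilityTheory.iIndepFun.integral_sum_pow_eq_zero_of_odd [IsFiniteMeasure μ]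
    (hindep : iIndepFun Y μ) (hmeas : ∀ i, Measurable (Y i)) {N : ℕ}
    (hL : ∀ i, MemLp (Y i) N μ) (hsymm : ∀ i, μ.map (Y i) = μ.map (fun ω => -Y i ω))
    (s : Finset ι) {n : ℕ} (hn : Odd n) (hnN : n ≤ N) :
    ∫ ω, (∑ i ∈ s, Y i ω) ^ n ∂μ = 0 := by
  induction s using Finset.induction_on generalizing n with
  | empty => simp [hn.pos.ne']
  | insert a s ha ih =>
    rw [hindep.integral_sum_insert_pow hmeas hL ha hnN]
    refine sum_eq_zero fun j hj => ?_
    have hjn : j ≤ n := Nat.lt_succ_iff.mp (mem_range.mp hj)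
    rcases Nat.even_or_odd j with hj | hj
    · rw [ih (Nat.Odd.sub_even hjn hn hj) (by omega), mul_zero]
    · rw [integral_pow_eq_zero_of_map_neg (hmeas a).aemeasurable (hsymm a) hj, mul_zero, zero_mul]

variable [IsProbabilityMeasure μ]

theorem ProbabilityTheory.iIndepFun.integral_sum_sq (hindep : iIndepFun Y μ)
    (hmeas : ∀ i, Measurable (Y i)) (hL : ∀ i, MemLp (Y i) (2 : ℕ) μ)
    (hmean : ∀ i, ∫ ω, Y i ω ∂μ = 0) (hvar : ∀ i, ∫ ω, Y i ω ^ 2 ∂μ = 1) (s : Finset ι) :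
    ∫ ω, (∑ i ∈ s, Y i ω) ^ 2 ∂μ = #s := by
  induction s using Finset.induction_on with
  | empty => simp
  | insert a s ha ih =>
    rw [hindep.integral_sum_insert_pow hmeas hL ha le_rfl]
    simp [sum_range_succ, hmean, hvar, ih, card_insert_of_notMem ha]

theorem ProbabilityTheory.iIndepFun.integral_sum_pow_four (hindep : iIndepFun Y μ)
    (hmeas : ∀ i, Measurable (Y i)) (hL : ∀ i, MemLp (Y i) (4 : ℕ) μ)
    (hsymm : ∀ i, μ.map (Y i) = μ.map (fun ω => -Y i ω)) (hvar : ∀ i, ∫ ω, Y i ω ^ 2 ∂μ = 1)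
    {ψ₄ : ℝ} (hm4 : ∀ i, ∫ ω, Y i ω ^ 4 ∂μ = ψ₄) (s : Finset ι) :
    ∫ ω, (∑ i ∈ s, Y i ω) ^ 4 ∂μ = #s * ψ₄ + 3 * #s * (#s - 1) := by
  have hodd (i : ι) {n : ℕ} (hn : Odd n) : ∫ ω, Y i ω ^ n ∂μ = 0 :=
    integral_pow_eq_zero_of_map_neg (hmeas i).aemeasurable (hsymm i) hn
  have hmean (i : ι) : ∫ ω, Y i ω ∂μ = 0 := by simpa using hodd i odd_one
  have hsum_odd {n : ℕ} (hn : Odd n) (hn4 : n ≤ 4) (t : Finset ι) :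
      ∫ ω, (∑ i ∈ t, Y i ω) ^ n ∂μ = 0 :=
    hindep.integral_sum_pow_eq_zero_of_odd hmeas hL hsymm t hn hn4
  have hsq := hindep.integral_sum_sq hmeas (fun i => (hL i).mono_exponent (by norm_num)) hmean hvar
  induction s using Finset.induction_on with
  | empty => simp
  | insert a s ha ih =>
    rw [hindep.integral_sum_insert_pow hmeas hL ha le_rfl]
    simp [sum_range_succ, hmean, hvar, hm4, hodd a (by decide : Odd 3),
      hsum_odd (by decide : Odd 3) (by norm_num), hsq, ih, card_insert_of_notMem ha, Nat.choose]
    ring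

theorem ProbabilityTheory.iIndepFun.integral_sum_pow_six (hindep : iIndepFun Y μ)
    (hmeas : ∀ i, Measurable (Y i)) (hL : ∀ i, MemLp (Y i) (6 : ℕ) μ)
    (hsymm : ∀ i, μ.map (Y i) = μ.map (fun ω => -Y i ω)) (hvar : ∀ i, ∫ ω, Y i ω ^ 2 ∂μ = 1)
    {ψ₄ ψ₆ : ℝ} (hm4 : ∀ i, ∫ ω, Y i ω ^ 4 ∂μ = ψ₄) (hm6 : ∀ i, ∫ ω, Y i ω ^ 6 ∂μ = ψ₆)
    (s : Finset ι) :
    ∫ ω, (∑ i ∈ s, Y i ω) ^ 6 ∂μ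
      = #s * ψ₆ + 15 * #s * (#s - 1) * ψ₄ + 15 * #s * (#s - 1) * (#s - 2) := by
  have hodd (i : ι) {n : ℕ} (hn : Odd n) : ∫ ω, Y i ω ^ n ∂μ = 0 :=
    integral_pow_eq_zero_of_map_neg (hmeas i).aemeasurable (hsymm i) hn
  have hmean (i : ι) : ∫ ω, Y i ω ∂μ = 0 := by simpa using hodd i odd_one
  have hsum_odd {n : ℕ} (hn : Odd n) (hn6 : n ≤ 6) (t : Finset ι) :
      ∫ ω, (∑ i ∈ t, Y i ω) ^ n ∂μ = 0 :=
    hindep.integral_sum_pow_eq_zero_of_odd hmeas hL hsymm t hn hn6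
  have hsq := hindep.integral_sum_sq hmeas (fun i => (hL i).mono_exponent (by norm_num)) hmean hvar
  have hfour := hindep.integral_sum_pow_four hmeas (fun i => (hL i).mono_exponent (by norm_num))
    hsymm hvar hm4
  induction s using Finset.induction_on with
  | empty => simp
  | insert a s ha ih =>
    rw [hindep.integral_sum_insert_pow hmeas hL ha le_rfl]
    simp [sum_range_succ, hmean, hvar, hm4, hm6, hodd a (by decide : Odd 3),
      hodd a (by decide : Odd 5), hsum_odd (by decide : Odd 3) (by norm_num),
      hsum_odd (by decide : Odd 5) (by norm_num), hsq, hfour, ih, card_insert_of_notMem ha,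
      Nat.choose]
    ring

end

/-- For each `k`,
`E[(Σᵢ Yᵢ)⁶·Y_k²] = ψ₈ + 16(d−1)ψ₆ + 15(d−1)ψ₄² + 60(d−1)(d−2)ψ₄ + 15(d−1)(d−2)(d−3)`,
where `Y` has independent coordinates, symmetric about 0, mean 0, variance 1, identical
moments `ψ₄, ψ₆, ψ₈` up to order 8. -/
theorem stmt_16 {Ω : Type*} [MeasurableSpace Ω] (μ : Measure Ω) [IsProbabilityMeasure μ]
    {d : ℕ} (Y : Fin d → Ω → ℝ) (ψ₄ ψ₆ ψ₈ : ℝ)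
    (hmeas : ∀ i, Measurable (Y i))
    (hindep : iIndepFun Y μ)
    (hsymm : ∀ i, μ.map (Y i) = μ.map (fun ω => -Y i ω))
    (hL8 : ∀ i, MemLp (Y i) 8 μ)
    (hmean : ∀ i, ∫ ω, Y i ω ∂μ = 0)
    (hvar : ∀ i, ∫ ω, (Y i ω) ^ 2 ∂μ = 1)
    (hm4 : ∀ i, ∫ ω, (Y i ω) ^ 4 ∂μ = ψ₄)
    (hm6 : ∀ i, ∫ ω, (Y i ω) ^ 6 ∂μ = ψ₆)
    (hm8 : ∀ i, ∫ ω, (Y i ω) ^ 8 ∂μ = ψ₈)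
    (k : Fin d) :
    ∫ ω, (∑ i, Y i ω) ^ 6 * (Y k ω) ^ 2 ∂μ
      = ψ₈ + 16 * (d - 1) * ψ₆ + 15 * (d - 1) * ψ₄ ^ 2
        + 60 * (d - 1) * (d - 2) * ψ₄ + 15 * (d - 1) * (d - 2) * (d - 3) := by
  have hL {n : ℕ} (hn : n ≤ 8) (i : Fin d) : MemLp (Y i) n μ :=
    (hL8 i).mono_exponent (by exact_mod_cast hn)
  have hodd {n : ℕ} (hn : Odd n) : ∫ ω, Y k ω ^ n ∂μ = 0 :=
    integral_pow_eq_zero_of_map_neg (hmeas k).aemeasurable (hsymm k) hn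
  have hcard : (#(univ.erase k) : ℝ) = d - 1 := by
    rw [card_erase_of_mem (mem_univ k), card_univ, Fintype.card_fin, Nat.cast_pred k.pos]
  have h2 := hindep.integral_sum_sq hmeas (hL (by norm_num)) hmean hvar (univ.erase k)
  have h4 := hindep.integral_sum_pow_four hmeas (hL (by norm_num)) hsymm hvar hm4 (univ.erase k)
  have h6 := hindep.integral_sum_pow_six hmeas (hL (by norm_num)) hsymm hvar hm4 hm6 (univ.erase k)
  rw [hcard] at h2 h4 h6
  rw [← insert_erase (mem_univ k),
    hindep.integral_sum_insert_pow_mul_pow hmeas (hL le_rfl) (notMem_erase k univ) le_rfl]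
  simp only [sum_range_succ, sum_range_zero, Nat.reduceAdd, Nat.reduceSub, hvar, hm4, hm6, hm8,
    hodd (by decide : Odd 3), hodd (by decide : Odd 5), hodd (by decide : Odd 7), h2, h4, h6]
  norm_num [Nat.choose]
  ring
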